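/- arXiv:0806.2377 — 2 statements merged into one kernel-verified Lean document; each statement's English description precedes it below -/
import Mathlib

section
/- Let g ≥ 1, let U ⊆ ℂ^g be open, let σ : (Fin g → ℂ) → ℂ be analytic on U, and let u ∈ U with σ(u) ≠ 0. Then for any six indices i,j,k,l,m,n the 6-index Q-function satisfies Q_{ijklmn}(u) = ℘_{ijklmn}(u) − 2·Σ ℘_{ab}(u)·℘_{cdef}(u) + 4·Σ ℘_{ab}(u)·℘_{cd}(u)·℘_{ef}(u), where the first sum runs over all 15 ways of choosing a two-element subset {a,b} of the index multiset {i,j,k,l,m,n} (with {c,d,e,f} the remaining four indices), namely the terms ℘_{ij}℘_{klmn}, ℘_{ik}℘_{jlmn}, ℘_{il}℘_{jkmn}, ℘_{im}℘_{jkln}, ℘_{in}℘_{jklm}, ℘_{jk}℘_{ilmn}, ℘_{jl}℘_{ikmn}, ℘_{jm}℘_{ikln}, ℘_{jn}℘_{iklm}, ℘_{kl}℘_{ijmn}, ℘_{km}℘_{ijln}, ℘_{kn}℘_{ijlm}, ℘_{lm}℘_{ijkn}, ℘_{ln}℘_{ijkm}, ℘_{mn}℘_{ijkl}, and the second sum runs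 over all 15 partitions of {i,j,k,l,m,n} into three pairs (perfect matchings). -/
open scoped BigOperators

/-- Partial derivative in the `i`-th coordinate direction. -/
noncomputable def pd {g : ℕ} (i : Fin g) (f : (Fin g → ℂ) → ℂ) : (Fin g → ℂ) → ℂ :=
  fun u => fderiv ℂ f u (Pi.single i 1)

/-- Iterated partial derivatives along a list of indices. -/
noncomputable def pdList {g : ℕ} (l : List (Fin g)) (f : (Fin g → ℂ) → ℂ) : (Fin g → ℂ) → ℂ :=
  l.foldr pd f

/-- The 2-index Kleinian ℘-function `℘_{ij} = (∂_iσ·∂_jσ − σ·∂_i∂_jσ)/σ²`. -/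
noncomputable def wp2 {g : ℕ} (σ : (Fin g → ℂ) → ℂ) (i j : Fin g) : (Fin g → ℂ) → ℂ :=
  fun u => (pd i σ u * pd j σ u - σ u * pd i (pd j σ) u) / (σ u) ^ 2

/-- The n-index Kleinian ℘-function `℘_{i j i₃ … iₙ} = ∂_{i₃}⋯∂_{iₙ} ℘_{ij}`. -/
noncomputable def wpN {g : ℕ} (σ : (Fin g → ℂ) → ℂ) (i j : Fin g) (rest : List (Fin g)) :
    (Fin g → ℂ) → ℂ :=
  pdList rest (wp2 σ i j)

/-- The diagonal value `(Δ_{i₁}⋯Δ_{iₙ} σ(u)σ(v))|_{v=u}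
    = Σ_{S⊆{1,…,n}} (−1)^{|S|}·((∏_{k∈S}∂_{i_k})σ)(u)·((∏_{k∉S}∂_{i_k})σ)(u)`. -/
noncomputable def hirotaDiag {g : ℕ} (σ : (Fin g → ℂ) → ℂ) (l : List (Fin g))
    (u : Fin g → ℂ) : ℂ :=
  ∑ S : Finset (Fin l.length),
    (-1 : ℂ) ^ S.card
      * pdList (((List.finRange l.length).filter (fun k => decide (k ∈ S))).map l.get) σ u
      * pdList (((List.finRange l.length).filter (fun k => decide (k ∉ S))).map l.get) σ u

/-- The n-index Q-function (n even): `Q_{i₁…iₙ}(u) = −(1/(2σ(u)²))·(Δ_{i₁}⋯Δ_{iₙ}σ(u)σ(v))|_{v=u}`. -/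
noncomputable def Qfun {g : ℕ} (σ : (Fin g → ℂ) → ℂ) (l : List (Fin g))
    (u : Fin g → ℂ) : ℂ :=
  -(1 / (2 * (σ u) ^ 2)) * hirotaDiag σ l u

/-!
Near `u` write `σ = exp h` with `h` analytic (a local logarithm of `σ`). Then
`∂_L σ = σ · B_L`, where `B_L` is the complete Bell polynomial in the derivatives of `h`, and
`℘_{ij…} = -∂_i∂_j⋯h`. Peeling one index at a time off `Δ_{i₁}⋯Δ_{iₙ}` turns the Hirota sum
into `σ²` times a polynomial in the derivatives of `h`, and the claim becomes a polynomial
identity in those derivatives.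
-/

open scoped Topology
open MvPolynomial

section PartialDerivatives

variable {g : ℕ} {f f₁ f₂ : (Fin g → ℂ) → ℂ} {u : Fin g → ℂ}

theorem pdList_nil (f : (Fin g → ℂ) → ℂ) : pdList [] f = f := rfl

theorem pdList_cons (a : Fin g) (l : List (Fin g)) (f : (Fin g → ℂ) → ℂ) :
    pdList (a :: l) f = pd a (pdList l f) := rfl

theorem pdList_append (l₁ l₂ : List (Fin g)) (f : (Fin g → ℂ) → ℂ) :
    pdList (l₁ ++ l₂) f = pdList l₁ (pdList l₂ f) :=
  List.foldr_append

theorem AnalyticAt.pd (hf : AnalyticAt ℂ f u) (a : Fin g) : AnalyticAt ℂ (pd a f) u :=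
  ((ContinuousLinearMap.apply ℂ ℂ (Pi.single a 1 : Fin g → ℂ)).analyticAt _).comp hf.fderiv

theorem AnalyticAt.pdList (hf : AnalyticAt ℂ f u) (l : List (Fin g)) :
    AnalyticAt ℂ (pdList l f) u := by
  induction l with
  | nil => exact hf
  | cons a l ih => exact ih.pd a

theorem Filter.EventuallyEq.pd (h : f₁ =ᶠ[𝓝 u] f₂) (a : Fin g) : pd a f₁ =ᶠ[𝓝 u] pd a f₂ := by
  filter_upwards [h.fderiv (𝕜 := ℂ)] with x hx
  simp only [_root_.pd, hx]

theorem Filter.EventuallyEq.pdList (h : f₁ =ᶠ[𝓝 u] f₂) (l : List (Fin g)) :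
    pdList l f₁ =ᶠ[𝓝 u] pdList l f₂ := by
  induction l with
  | nil => exact h
  | cons a l ih => exact ih.pd a

theorem pd_const (a : Fin g) (c : ℂ) : pd a (fun _ => c) u = 0 := by
  simp [pd]

theorem pd_add (a : Fin g) (h₁ : DifferentiableAt ℂ f₁ u) (h₂ : DifferentiableAt ℂ f₂ u) :
    pd a (fun x => f₁ x + f₂ x) u = pd a f₁ u + pd a f₂ u := by
  simp [pd, fderiv_fun_add h₁ h₂]

theorem pd_mul (a : Fin g) (h₁ : DifferentiableAt ℂ f₁ u) (h₂ : DifferentiableAt ℂ f₂ u) :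
    pd a (fun x => f₁ x * f₂ x) u = pd a f₁ u * f₂ u + f₁ u * pd a f₂ u := by
  simp [pd, fderiv_fun_mul h₁ h₂]
  ring

theorem pd_cexp (a : Fin g) (hf : DifferentiableAt ℂ f u) :
    pd a (fun x => Complex.exp (f x)) u = Complex.exp (f u) * pd a f u := by
  simp [pd, hf.hasFDerivAt.cexp.fderiv]

theorem pdList_neg (l : List (Fin g)) (f : (Fin g → ℂ) → ℂ) :
    pdList l (-f) = -pdList l f := by
  induction l with
  | nil => rfl
  | cons a l ih =>
    funext x
    simp [pdList_cons, ih, pd, fderiv_neg]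

theorem pd_comm (hf : AnalyticAt ℂ f u) (a b : Fin g) : pd a (pd b f) u = pd b (pd a f) u := by
  have hsymm : IsSymmSndFDerivAt ℂ f u :=
    (hf.contDiffAt (n := 2)).isSymmSndFDerivAt (by simp)
  have hd : DifferentiableAt ℂ (fderiv ℂ f) u := hf.fderiv.differentiableAt
  have hpd : ∀ v w : Fin g → ℂ,
      fderiv ℂ (fun x => fderiv ℂ f x v) u w = fderiv ℂ (fderiv ℂ f) u w v := by
    intro v w
    simp [fderiv_clm_apply hd (differentiableAt_const v)]
  unfold pd
  rw [hpd, hpd]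
  exact hsymm _ _

theorem pdList_eventuallyEq_of_perm (hf : AnalyticAt ℂ f u) {l₁ l₂ : List (Fin g)}
    (hl : l₁.Perm l₂) : pdList l₁ f =ᶠ[𝓝 u] pdList l₂ f := by
  induction hl with
  | nil => rfl
  | cons a _ ih => exact ih.pd a
  | swap a b l =>
    filter_upwards [(hf.pdList l).eventually_analyticAt] with x hx
    exact pd_comm hx b a
  | trans _ _ ih₁ ih₂ => exact ih₁.trans ih₂

end PartialDerivatives

section DifferentialPolynomials

variable {g : ℕ} {f : (Fin g → ℂ) → ℂ} {u : Fin g → ℂ}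

/-- In `MvPolynomial (List (Fin g)) ℂ` the variable `X L` stands for `∂_L f`, and
`jetDerivation a` is the formal `∂_a`. -/
noncomputable def jetDerivation (a : Fin g) :
    Derivation ℂ (MvPolynomial (List (Fin g)) ℂ) (MvPolynomial (List (Fin g)) ℂ) :=
  mkDerivation ℂ fun L => X (a :: L)

theorem jetDerivation_X (a : Fin g) (L : List (Fin g)) :
    jetDerivation a (X L) = X (a :: L) :=
  mkDerivation_X ℂ _ L

noncomputable def jet (f : (Fin g → ℂ) → ℂ) (x : Fin g → ℂ) (L : List (Fin g)) : ℂ := pdList L f x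

theorem AnalyticAt.eval_jet (hf : AnalyticAt ℂ f u) (p : MvPolynomial (List (Fin g)) ℂ) :
    AnalyticAt ℂ (fun x => eval (jet f x) p) u := by
  induction p using MvPolynomial.induction_on with
  | C c => simpa using analyticAt_const
  | add p q hp hq => simpa only [map_add] using hp.fun_add hq
  | mul_X p L hp => simpa only [map_mul, eval_X, jet] using hp.fun_mul (hf.pdList L)

theorem pd_eval_jet (hf : AnalyticAt ℂ f u) (a : Fin g) (p : MvPolynomial (List (Fin g)) ℂ) :
    pd a (fun x => eval (jet f x) p) u = eval (jet f u) (jetDerivation a p) := by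
  induction p using MvPolynomial.induction_on with
  | C c => simpa using pd_const a c
  | add p q hp hq =>
    simp only [map_add]
    rw [pd_add a (hf.eval_jet p).differentiableAt (hf.eval_jet q).differentiableAt, hp, hq]
  | mul_X p L hp =>
    simp only [map_mul, Derivation.leibniz, smul_eq_mul, map_add, jetDerivation_X, eval_X, jet]
    rw [pd_mul a (hf.eval_jet p).differentiableAt ((hf.pdList L).differentiableAt), hp]
    simp only [pdList_cons]
    ring

noncomputable def expBell : List (Fin g) → MvPolynomial (List (Fin g)) ℂ
  | [] => 1
  | a :: L => X [a] * expBell L + jetDerivation a (expBell L)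

theorem pdList_cexp_eventuallyEq (hf : AnalyticAt ℂ f u) (L : List (Fin g)) :
    pdList L (fun x => Complex.exp (f x))
      =ᶠ[𝓝 u] fun x => Complex.exp (f x) * eval (jet f x) (expBell L) := by
  induction L with
  | nil => exact .of_forall fun x => by simp [pdList, expBell]
  | cons a L ih =>
    filter_upwards [ih.pd a, hf.eventually_analyticAt] with x hx hfx
    rw [pdList_cons, hx, pd_mul a hfx.differentiableAt.cexp (hfx.eval_jet _).differentiableAt,
      pd_cexp a hfx.differentiableAt, pd_eval_jet hfx]
    simp only [expBell, map_add, map_mul, eval_X, jet, pdList_cons, pdList_nil]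
    ring

end DifferentialPolynomials

section HirotaSum

open Finset in
theorem Fin.sum_finset_succ {M : Type*} [AddCommMonoid M] {n : ℕ}
    (F : Finset (Fin (n + 1)) → M) :
    ∑ S, F S
      = ∑ T : Finset (Fin n), (F (T.map (succEmb n)) + F (insert 0 (T.map (succEmb n)))) := by
  have huniv : (univ : Finset (Fin (n + 1))) = insert 0 (univ.map (succEmb n)) := by
    ext i; cases i using Fin.cases <;> simp
  have hpow : (univ.map (succEmb n)).powerset
      = (univ : Finset (Finset (Fin n))).map (mapEmbedding (succEmb n)).toEmbedding := by
    ext t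
    simp [Finset.subset_map_iff, eq_comm]
  rw [← powerset_univ, huniv, sum_powerset_insert (by simp), hpow, sum_map, sum_map,
    ← sum_add_distrib]
  rfl

def List.selectPositions {α : Type*} (l : List α) (p : Fin l.length → Bool) : List α :=
  ((List.finRange l.length).filter p).map l.get

theorem List.selectPositions_cons {α : Type*} (a : α) (l : List α)
    (p : Fin (l.length + 1) → Bool) :
    (a :: l).selectPositions p
      = (if p 0 then [a] else []) ++ l.selectPositions (fun k => p k.succ) := by
  change ((List.finRange (l.length + 1)).filter p).map (a :: l).get = _
  rw [List.finRange_succ, List.filter_cons]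
  split <;> simp [List.filter_map, List.map_map, Function.comp_def] <;> rfl

variable {g : ℕ}

/-- The extra derivatives `M₁`, `M₂` on the two factors are what let the sum be unfolded one
index of `l` at a time. -/
noncomputable def hirotaDiagWith (l M₁ M₂ : List (Fin g)) (f₁ f₂ : (Fin g → ℂ) → ℂ)
    (u : Fin g → ℂ) : ℂ :=
  ∑ S : Finset (Fin l.length), (-1 : ℂ) ^ S.card
    * pdList (M₁ ++ l.selectPositions (fun k => decide (k ∈ S))) f₁ u
    * pdList (M₂ ++ l.selectPositions (fun k => decide (k ∉ S))) f₂ u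

theorem hirotaDiag_eq_hirotaDiagWith (σ : (Fin g → ℂ) → ℂ) (l : List (Fin g)) (u : Fin g → ℂ) :
    hirotaDiag σ l u = hirotaDiagWith l [] [] σ σ u := rfl

theorem hirotaDiagWith_nil (M₁ M₂ : List (Fin g)) (f₁ f₂ : (Fin g → ℂ) → ℂ) (u : Fin g → ℂ) :
    hirotaDiagWith [] M₁ M₂ f₁ f₂ u = pdList M₁ f₁ u * pdList M₂ f₂ u := by
  refine (Fintype.sum_subsingleton (ι := Finset (Fin 0)) _ ∅).trans ?_
  simp [List.selectPositions]

theorem hirotaDiagWith_cons (a : Fin g) (l M₁ M₂ : List (Fin g)) (f₁ f₂ : (Fin g → ℂ) → ℂ)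
    (u : Fin g → ℂ) :
    hirotaDiagWith (a :: l) M₁ M₂ f₁ f₂ u
      = hirotaDiagWith l M₁ (M₂ ++ [a]) f₁ f₂ u - hirotaDiagWith l (M₁ ++ [a]) M₂ f₁ f₂ u := by
  refine (Fin.sum_finset_succ (n := l.length) _).trans ?_
  rw [Finset.sum_add_distrib, hirotaDiagWith, hirotaDiagWith, sub_eq_add_neg,
    ← Finset.sum_neg_distrib]
  congr 1 <;> refine Finset.sum_congr rfl fun T _ => ?_
  · simp [List.selectPositions_cons]
  · simp [List.selectPositions_cons, pow_succ]

end HirotaSum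

theorem AnalyticAt.exists_eventuallyEq_cexp {E : Type*} [NormedAddCommGroup E] [NormedSpace ℂ E]
    {σ : E → ℂ} {u : E} (hσ : AnalyticAt ℂ σ u) (hσ0 : σ u ≠ 0) :
    ∃ h : E → ℂ, AnalyticAt ℂ h u ∧ σ =ᶠ[𝓝 u] fun x => Complex.exp (h x) := by
  have hslit : σ u / σ u ∈ Complex.slitPlane := by
    rw [div_self hσ0]
    exact Complex.one_mem_slitPlane
  have hratio : ContinuousAt (fun x => σ x / σ u) u := hσ.continuousAt.div_const _
  refine ⟨fun x => Complex.log (σ u) + Complex.log (σ x / σ u),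
    analyticAt_const.add ((hσ.div_const).clog hslit), ?_⟩
  filter_upwards [hratio.eventually_mem (Complex.isOpen_slitPlane.mem_nhds hslit)] with x hx
  rw [Complex.exp_add, Complex.exp_log hσ0, Complex.exp_log (Complex.slitPlane_ne_zero hx)]
  field_simp

section Kleinian

variable {g : ℕ} {σ h : (Fin g → ℂ) → ℂ} {u : Fin g → ℂ}

theorem pdList_eq_mul_eval_expBell (hh : AnalyticAt ℂ h u)
    (hσh : σ =ᶠ[𝓝 u] fun x => Complex.exp (h x)) (L : List (Fin g)) :
    pdList L σ u = σ u * eval (jet h u) (expBell L) := by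
  rw [((hσh.pdList L).trans (pdList_cexp_eventuallyEq hh L)).eq_of_nhds, hσh.eq_of_nhds]

theorem wp2_eq_neg_pdList (hh : AnalyticAt ℂ h u) (hσh : σ =ᶠ[𝓝 u] fun x => Complex.exp (h x))
    (a b : Fin g) : wp2 σ a b u = -pdList [a, b] h u := by
  have hσu : σ u ≠ 0 := hσh.eq_of_nhds ▸ Complex.exp_ne_zero _
  calc wp2 σ a b u = (pdList [a] σ u * pdList [b] σ u - σ u * pdList [a, b] σ u) / σ u ^ 2 := rfl
    _ = -pdList [a, b] h u := by
      simp only [pdList_eq_mul_eval_expBell hh hσh, expBell, map_add, map_mul, map_one, map_zero,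
        Derivation.map_one_eq_zero, Derivation.leibniz, smul_eq_mul, jetDerivation_X, eval_X, jet]
      field_simp
      ring

theorem wp2_eventuallyEq_neg_pdList (hh : AnalyticAt ℂ h u)
    (hσh : σ =ᶠ[𝓝 u] fun x => Complex.exp (h x)) (a b : Fin g) :
    wp2 σ a b =ᶠ[𝓝 u] -pdList [a, b] h := by
  filter_upwards [hh.eventually_analyticAt, hσh.eventuallyEq_nhds] with x hhx hσx
  exact wp2_eq_neg_pdList hhx hσx a b

theorem wpN_eq_neg_pdList (hh : AnalyticAt ℂ h u) (hσh : σ =ᶠ[𝓝 u] fun x => Complex.exp (h x))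
    (a b : Fin g) (rest : List (Fin g)) :
    wpN σ a b rest u = -pdList (a :: b :: rest) h u := by
  calc wpN σ a b rest u = pdList rest (-pdList [a, b] h) u :=
        ((wp2_eventuallyEq_neg_pdList hh hσh a b).pdList rest).eq_of_nhds
    _ = -pdList (rest ++ [a, b]) h u := by rw [pdList_neg, pdList_append]; rfl
    _ = -pdList ([a, b] ++ rest) h u := by
        rw [(pdList_eventuallyEq_of_perm hh List.perm_append_comm).eq_of_nhds]
    _ = -pdList (a :: b :: rest) h u := rfl

end Kleinian

theorem six_index_Q_in_terms_of_wp_general {g : ℕ} (U : Set (Fin g → ℂ))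
    (σ : (Fin g → ℂ) → ℂ) (hσ : AnalyticOnNhd ℂ σ U) (u : Fin g → ℂ) (hu : u ∈ U)
    (hσ0 : σ u ≠ 0) (i j k l m n : Fin g) :
    Qfun σ [i, j, k, l, m, n] u =
      wpN σ i j [k, l, m, n] u
      - 2 * ( wp2 σ i j u * wpN σ k l [m, n] u
            + wp2 σ i k u * wpN σ j l [m, n] u
            + wp2 σ i l u * wpN σ j k [m, n] u
            + wp2 σ i m u * wpN σ j k [l, n] u
            + wp2 σ i n u * wpN σ j k [l, m] u
            + wp2 σ j k u * wpN σ i l [m, n] u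
            + wp2 σ j l u * wpN σ i k [m, n] u
            + wp2 σ j m u * wpN σ i k [l, n] u
            + wp2 σ j n u * wpN σ i k [l, m] u
            + wp2 σ k l u * wpN σ i j [m, n] u
            + wp2 σ k m u * wpN σ i j [l, n] u
            + wp2 σ k n u * wpN σ i j [l, m] u
            + wp2 σ l m u * wpN σ i j [k, n] u
            + wp2 σ l n u * wpN σ i j [k, m] u
            + wp2 σ m n u * wpN σ i j [k, l] u )
      + 4 * ( wp2 σ i j u * wp2 σ k l u * wp2 σ m n u
            + wp2 σ i j u * wp2 σ k m u * wp2 σ l n u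
            + wp2 σ i j u * wp2 σ k n u * wp2 σ l m u
            + wp2 σ i k u * wp2 σ j l u * wp2 σ m n u
            + wp2 σ i k u * wp2 σ j m u * wp2 σ l n u
            + wp2 σ i k u * wp2 σ j n u * wp2 σ l m u
            + wp2 σ i l u * wp2 σ j k u * wp2 σ m n u
            + wp2 σ i l u * wp2 σ j m u * wp2 σ k n u
            + wp2 σ i l u * wp2 σ j n u * wp2 σ k m u
            + wp2 σ i m u * wp2 σ j k u * wp2 σ l n u
            + wp2 σ i m u * wp2 σ j l u * wp2 σ k n u
            + wp2 σ i m u * wp2 σ j n u * wp2 σ k l u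
            + wp2 σ i n u * wp2 σ j k u * wp2 σ l m u
            + wp2 σ i n u * wp2 σ j l u * wp2 σ k m u
            + wp2 σ i n u * wp2 σ j m u * wp2 σ k l u ) := by
  obtain ⟨h, hh, hσh⟩ := (hσ u hu).exists_eventuallyEq_cexp hσ0
  rw [Qfun, neg_mul, one_div, neg_eq_iff_eq_neg,
    inv_mul_eq_iff_eq_mul₀ (mul_ne_zero two_ne_zero (pow_ne_zero 2 hσ0)),
    hirotaDiag_eq_hirotaDiagWith]
  simp only [hirotaDiagWith_cons, hirotaDiagWith_nil, List.nil_append, List.cons_append,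
    pdList_eq_mul_eval_expBell hh hσh, wp2_eq_neg_pdList hh hσh, wpN_eq_neg_pdList hh hσh]
  -- both sides are now polynomials in `σ u` and the derivatives `∂_L h u`
  simp only [expBell, map_add, map_mul, map_one, map_zero, Derivation.map_one_eq_zero,
    Derivation.leibniz, smul_eq_mul, jetDerivation_X, eval_X, jet]
  ring

/-- the 6-index Q-function in terms of Kleinian ℘-functions. -/
theorem six_index_Q_in_terms_of_wp {g : ℕ} (hg : 1 ≤ g) (U : Set (Fin g → ℂ)) (hU : IsOpen U)
    (σ : (Fin g → ℂ) → ℂ) (hσ : AnalyticOnNhd ℂ σ U) (u : Fin g → ℂ) (hu : u ∈ U)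
    (hσ0 : σ u ≠ 0) (i j k l m n : Fin g) :
    Qfun σ [i, j, k, l, m, n] u =
      wpN σ i j [k, l, m, n] u
      - 2 * ( wp2 σ i j u * wpN σ k l [m, n] u
            + wp2 σ i k u * wpN σ j l [m, n] u
            + wp2 σ i l u * wpN σ j k [m, n] u
            + wp2 σ i m u * wpN σ j k [l, n] u
            + wp2 σ i n u * wpN σ j k [l, m] u
            + wp2 σ j k u * wpN σ i l [m, n] u
            + wp2 σ j l u * wpN σ i k [m, n] u
            + wp2 σ j m u * wpN σ i k [l, n] u
            + wp2 σ j n u * wpN σ i k [l, m] u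
            + wp2 σ k l u * wpN σ i j [m, n] u
            + wp2 σ k m u * wpN σ i j [l, n] u
            + wp2 σ k n u * wpN σ i j [l, m] u
            + wp2 σ l m u * wpN σ i j [k, n] u
            + wp2 σ l n u * wpN σ i j [k, m] u
            + wp2 σ m n u * wpN σ i j [k, l] u )
      + 4 * ( wp2 σ i j u * wp2 σ k l u * wp2 σ m n u
            + wp2 σ i j u * wp2 σ k m u * wp2 σ l n u
            + wp2 σ i j u * wp2 σ k n u * wp2 σ l m u
            + wp2 σ i k u * wp2 σ j l u * wp2 σ m n u
            + wp2 σ i k u * wp2 σ j m u * wp2 σ l n u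
            + wp2 σ i k u * wp2 σ j n u * wp2 σ l m u
            + wp2 σ i l u * wp2 σ j k u * wp2 σ m n u
            + wp2 σ i l u * wp2 σ j m u * wp2 σ k n u
            + wp2 σ i l u * wp2 σ j n u * wp2 σ k m u
            + wp2 σ i m u * wp2 σ j k u * wp2 σ l n u
            + wp2 σ i m u * wp2 σ j l u * wp2 σ k n u
            + wp2 σ i m u * wp2 σ j n u * wp2 σ k l u
            + wp2 σ i n u * wp2 σ j k u * wp2 σ l m u
            + wp2 σ i n u * wp2 σ j l u * wp2 σ k m u
            + wp2 σ i n u * wp2 σ j m u * wp2 σ k l u ) :=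
  six_index_Q_in_terms_of_wp_general U σ hσ u hu hσ0 i j k l m n
end

section
/- Let n and s be coprime natural numbers with n, s ≥ 2. Then the number of natural numbers not representable in the form an + bs with a, b ∈ ℕ (nonnegative integers) is exactly (n−1)(s−1)/2. (This is the count of Weierstrass gap numbers for the pair (n,s), and equals the genus g = (n−1)(s−1)/2 of the (n,s)-curve.) -/
/-!
Every integer `m` has a unique expression `m = a * n + b * s` with `a ∈ ℤ` and `0 ≤ b < n`,
and `m` is a sum of `n`'s and `s`'s exactly when `0 ≤ a`. Since
`(n * s - n - s) - m = (-1 - a) * n + (n - 1 - b) * s` is again such an expression, exactly one of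
`m` and `n * s - n - s - m` is representable. So every gap lies in `[0, (n - 1) * (s - 1))` and
the reflection `m ↦ (n - 1) * (s - 1) - 1 - m` exchanges the gaps with the representable numbers
of that interval: the gaps are half of it.
-/

open Finset

theorem Finset.two_mul_card_filter_range_of_iff_not_reflect {N : ℕ} (p : ℕ → Prop)
    [DecidablePred p] (h : ∀ m < N, p m ↔ ¬ p (N - 1 - m)) :
    2 * #((range N).filter p) = N := by
  have hreflect : #((range N).filter p) = #((range N).filter fun m ↦ ¬ p m) := by
    refine card_nbij' (fun m ↦ N - 1 - m) (fun m ↦ N - 1 - m) ?_ ?_ ?_ ?_ <;>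
      intro m hm <;> simp only [coe_filter, Set.mem_ofPred_eq, mem_range] at hm ⊢
    · exact ⟨by omega, (h m hm.1).mp hm.2⟩
    · refine ⟨by omega, ?_⟩
      rw [h (N - 1 - m) (by omega), Nat.sub_sub_self (by omega)]
      exact hm.2
    · omega
    · omega
  have hsplit := card_filter_add_card_filter_not (s := range N) p
  rw [card_range] at hsplit
  omega

namespace GapSequence

def IsRepresentable (n s : ℕ) (m : ℤ) : Prop := ∃ a b : ℕ, m = a * n + b * s

variable {n s : ℕ}

theorem isRepresentable_natCast_iff {m : ℕ} :
    IsRepresentable n s m ↔ ∃ a b : ℕ, m = a * n + b * s := by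
  simp only [IsRepresentable]
  exact_mod_cast Iff.rfl

theorem IsRepresentable.nonneg {m : ℤ} (h : IsRepresentable n s m) : 0 ≤ m := by
  obtain ⟨a, b, rfl⟩ := h
  positivity

theorem exists_normalForm (hcop : n.Coprime s) (hn : 0 < n) (m : ℤ) :
    ∃ a b : ℤ, 0 ≤ b ∧ b < n ∧ m = a * n + b * s := by
  obtain ⟨x, y, hxy⟩ := Nat.isCoprime_iff_coprime.mpr hcop
  have hn' : (0 : ℤ) < n := by exact_mod_cast hn
  refine ⟨m * x + m * y / n * s, m * y % n, Int.emod_nonneg _ hn'.ne',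
    Int.emod_lt_of_pos _ hn', ?_⟩
  calc m = m * (x * n + y * s) := by rw [hxy, mul_one]
    _ = m * x * n + (n * (m * y / n) + m * y % n) * s := by rw [Int.mul_ediv_add_emod]; ring
    _ = _ := by ring

theorem normalForm_unique (hcop : n.Coprime s) {a b a' b' : ℤ} (hb : 0 ≤ b) (hbn : b < n)
    (hb' : 0 ≤ b') (hbn' : b' < n) (h : a * n + b * s = a' * n + b' * s) : a = a' ∧ b = b' := by
  have hdvd : (n : ℤ) ∣ (b - b') * s := ⟨a' - a, by linear_combination h⟩
  have hbb : b = b' := by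
    have := Int.eq_zero_of_abs_lt_dvd
      ((Nat.isCoprime_iff_coprime.mpr hcop).dvd_of_dvd_mul_right hdvd)
      (abs_sub_lt_iff.mpr ⟨by omega, by omega⟩)
    omega
  subst hbb
  exact ⟨mul_right_cancel₀ (b := (n : ℤ)) (by omega) (by linarith), rfl⟩

theorem isRepresentable_normalForm_iff (hcop : n.Coprime s) {a b : ℤ} (hb : 0 ≤ b)
    (hbn : b < n) :
    IsRepresentable n s (a * n + b * s) ↔ 0 ≤ a := by
  constructor
  · rintro ⟨a', b', h⟩
    have h' : a * n + b * s = (a' + b' / n * s : ℕ) * n + (b' % n : ℕ) * s := by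
      rw [h]
      nth_rw 1 [← Nat.mod_add_div b' n]
      push_cast
      ring
    have hlt : ((b' % n : ℕ) : ℤ) < n := by exact_mod_cast Nat.mod_lt _ (by omega)
    rw [(normalForm_unique hcop hb hbn (by positivity) hlt h').1]
    positivity
  · intro ha
    exact ⟨a.toNat, b.toNat, by rw [Int.toNat_of_nonneg ha, Int.toNat_of_nonneg hb]⟩

theorem isRepresentable_iff_not_isRepresentable_sub (hcop : n.Coprime s) (hn : 0 < n) (m : ℤ) :
    IsRepresentable n s m ↔ ¬ IsRepresentable n s (n * s - n - s - m) := by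
  obtain ⟨a, b, hb, hbn, rfl⟩ := exists_normalForm hcop hn m
  have hdual : (n * s - n - s - (a * n + b * s) : ℤ) = (-1 - a) * n + (n - 1 - b) * s := by ring
  rw [hdual, isRepresentable_normalForm_iff hcop hb hbn,
    isRepresentable_normalForm_iff hcop (by omega) (by omega)]
  omega

theorem isRepresentable_of_lt (hcop : n.Coprime s) (hn : 0 < n) {m : ℤ}
    (hm : n * s - n - s < m) : IsRepresentable n s m :=
  (isRepresentable_iff_not_isRepresentable_sub hcop hn m).mpr fun h ↦ by
    have := h.nonneg
    omega

end GapSequence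

open GapSequence in
/-- for coprime `n, s ≥ 2`, the number of natural numbers not representable
as `an + bs` with `a, b ∈ ℕ` (the Weierstrass gap numbers of the pair `(n,s)`) is exactly
`(n−1)(s−1)/2`, the genus of the `(n,s)`-curve. -/
theorem card_gap_sequence (n s : ℕ) (hn : 2 ≤ n) (hs : 2 ≤ s) (hcop : Nat.Coprime n s) :
    {m : ℕ | ¬ ∃ a b : ℕ, m = a * n + b * s}.Finite ∧
    {m : ℕ | ¬ ∃ a b : ℕ, m = a * n + b * s}.ncard = (n - 1) * (s - 1) / 2 := by
  classical
  set N := (n - 1) * (s - 1)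
  have hN : ((N : ℕ) : ℤ) - 1 = n * s - n - s := by
    simp only [N]; push_cast [Nat.one_le_of_lt hn, Nat.one_le_of_lt hs]; ring
  have hgaps : {m : ℕ | ¬ ∃ a b : ℕ, m = a * n + b * s} =
      ↑((range N).filter fun m : ℕ ↦ ¬ IsRepresentable n s m) := by
    ext m
    simp only [Set.mem_ofPred_eq, coe_filter, mem_range, isRepresentable_natCast_iff]
    refine ⟨fun h ↦ ⟨?_, h⟩, And.right⟩
    by_contra hm
    exact h (isRepresentable_natCast_iff.mp (isRepresentable_of_lt hcop (by omega) (by omega)))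
  have hcount := two_mul_card_filter_range_of_iff_not_reflect (N := N)
    (fun m : ℕ ↦ ¬ IsRepresentable n s m) fun m hm ↦ by
      have hreflect : (n * s - n - s - ((N - 1 - m : ℕ) : ℤ)) = m := by
        push_cast [Nat.le_sub_one_of_lt hm, Nat.one_le_of_lt hm]
        omega
      rw [isRepresentable_iff_not_isRepresentable_sub hcop (by omega) ((N - 1 - m : ℕ) : ℤ),
        hreflect, not_not]
  rw [hgaps, Set.ncard_coe_finset]
  exact ⟨finite_toSet _, by omega⟩
end
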